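/- arXiv:2404.04610 — 8 statements merged into one kernel-verified Lean document; each statement's English description precedes it below -/
import Mathlib

section
/- Let R be a commutative ring and S a multiplicative subset of R. If R is an S-Noetherian ring, then every ideal I of R is u-S-finitely presented; that is, there exist an element s ∈ S and an exact sequence of R-modules 0 → T₁ → F → I → T₂ → 0 with F finitely presented and sT₁ = sT₂ = 0. -/
universe u

open Submodule

/-- Every submodule is `S`-finite: there is `s ∈ S` and a finite subset `T` of the
submodule such that `s` multiplies the submodule into the span of `T`. -/
private def SFin (R : Type u) [CommRing R] (S : Submonoid R) (M : Type u)
    [AddCommGroup M] [Module R M] : Prop :=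
  ∀ N : Submodule R M, ∃ s ∈ S, ∃ T : Set M, T.Finite ∧ T ⊆ ↑N ∧
    ∀ x ∈ N, s • x ∈ Submodule.span R T

private lemma sfin_base (R : Type u) [CommRing R] (S : Submonoid R)
    (hSN : ∀ I : Ideal R, ∃ s ∈ S, ∃ J : Ideal R, J.FG ∧ J ≤ I ∧ ∀ x ∈ I, s * x ∈ J) :
    SFin R S R := by
  intro N
  obtain ⟨s, hs, J, hJfg, hJN, hmul⟩ := hSN N
  obtain ⟨T, hT⟩ := hJfg
  refine ⟨s, hs, ↑T, T.finite_toSet, fun t ht => hJN (hT ▸ subset_span ht), fun x hx => ?_⟩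
  have h2 : s * x ∈ Ideal.span (↑T : Set R) := hT ▸ hmul x hx
  simpa [smul_eq_mul] using h2

private lemma sfin_exact (R : Type u) [CommRing R] (S : Submonoid R)
    {M M₁ M₂ : Type u} [AddCommGroup M] [Module R M] [AddCommGroup M₁] [Module R M₁]
    [AddCommGroup M₂] [Module R M₂]
    (g : M₁ →ₗ[R] M) (f : M →ₗ[R] M₂) (hker : LinearMap.ker f = LinearMap.range g)
    (h1 : SFin R S M₁) (h2 : SFin R S M₂) : SFin R S M := by
  intro N
  obtain ⟨s₁, hs₁, T₂, hT₂fin, hT₂sub, hT₂⟩ := h2 (N.map f)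
  -- lift the generators of `T₂` to elements of `N`
  have hlift : ∀ t ∈ T₂, ∃ y, y ∈ N ∧ f y = t := by
    intro t ht
    obtain ⟨y, hy, hfy⟩ := hT₂sub ht
    exact ⟨y, hy, hfy⟩
  choose! y hyN hfy using hlift
  obtain ⟨s₂, hs₂, T₁, hT₁fin, hT₁sub, hT₁⟩ := h1 (N.comap g)
  refine ⟨s₂ * s₁, S.mul_mem hs₂ hs₁, y '' T₂ ∪ g '' T₁,
    (hT₂fin.image y).union (hT₁fin.image g), ?_, ?_⟩
  · rintro z (⟨t, ht, rfl⟩ | ⟨t, ht, rfl⟩)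
    · exact hyN t ht
    · exact hT₁sub ht
  · intro x hx
    have hmem : s₁ • f x ∈ span R T₂ := hT₂ (f x) (mem_map_of_mem hx)
    -- write `s₁ • f x` as a combination of elements of `T₂` and pull back
    have hyspan : span R (y '' T₂) ≤ N := span_le.mpr (by rintro z ⟨t, ht, rfl⟩; exact hyN t ht)
    -- define `a₀` as the corresponding combination of lifts
    obtain ⟨c, hc⟩ := (Finsupp.mem_span_iff_linearCombination R T₂ (s₁ • f x)).mp
      (by simpa using hmem)
    set a₀ : M := Finsupp.linearCombination R (fun t : T₂ => y t) c with ha₀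
    have ha₀span : a₀ ∈ span R (y '' T₂) := by
      rw [ha₀]
      apply Submodule.sum_smul_mem
      intro t _
      exact subset_span ⟨t, t.2, rfl⟩
    have hfa₀ : f a₀ = s₁ • f x := by
      rw [ha₀, ← hc]
      simp only [Finsupp.linearCombination_apply, Finsupp.sum, map_sum, map_smul]
      refine Finset.sum_congr rfl fun t _ => ?_
      rw [hfy t t.2]
    have hkerm : s₁ • x - a₀ ∈ LinearMap.ker f := by
      simp [LinearMap.mem_ker, map_sub, hfa₀, map_smul]
    rw [hker] at hkerm
    obtain ⟨u, hu⟩ := hkerm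
    have huN : u ∈ N.comap g := by
      simp only [mem_comap, hu]
      exact N.sub_mem (N.smul_mem s₁ hx) (hyspan ha₀span)
    have hu2 : s₂ • u ∈ span R T₁ := hT₁ u huN
    have hgu : g (s₂ • u) ∈ span R (g '' T₁) := by
      rw [← Submodule.map_span]
      exact mem_map_of_mem hu2
    have key : (s₂ * s₁) • x = s₂ • a₀ + g (s₂ • u) := by
      rw [map_smul, hu, mul_smul]
      module
    rw [key, span_union]
    exact add_mem_sup (smul_mem _ _ ha₀span) hgu

private lemma sfin_pi (R : Type u) [CommRing R] (S : Submonoid R)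
    (h : SFin R S R) : ∀ n : ℕ, SFin R S (Fin n → R) := by
  intro n
  induction n with
  | zero =>
    intro N
    refine ⟨1, S.one_mem, ∅, Set.finite_empty, by simp, fun x hx => ?_⟩
    have : x = 0 := Subsingleton.elim x 0
    simp [this]
  | succ n ih =>
    refine sfin_exact R S (LinearMap.single R (fun _ : Fin (n + 1) => R) (Fin.last n))
      (LinearMap.funLeft R R Fin.castSucc) ?_ h ih
    ext x
    simp only [LinearMap.mem_ker, LinearMap.mem_range, LinearMap.funLeft_apply]
    constructor
    · intro hx
      refine ⟨x (Fin.last n), funext fun j => ?_⟩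
      refine Fin.lastCases ?_ (fun i => ?_) j
      · simp [Pi.single_eq_same]
      · have : x (Fin.castSucc i) = 0 := congrFun hx i
        simp [Pi.single_eq_of_ne (Fin.castSucc_lt_last i).ne, this]
    · rintro ⟨c, rfl⟩
      funext i
      simp [Pi.single_eq_of_ne (Fin.castSucc_lt_last i).ne]

/-- If `R` is `S`-Noetherian (every ideal `I` admits `s ∈ S` and a finitely generated
subideal `J ⊆ I` with `s • I ⊆ J`), then every ideal `I` of `R` is `u`-`S`-finitely
presented: there are `s ∈ S` and an exact sequence `0 → T₁ → F → I → T₂ → 0` with `F`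
finitely presented, `T₁ = ker`, `T₂ = coker`, and `s • T₁ = s • T₂ = 0`. -/
theorem sNoetherian_ideal_uS_finitelyPresented
    (R : Type u) [CommRing R] (S : Submonoid R)
    (hSN : ∀ I : Ideal R, ∃ s ∈ S, ∃ J : Ideal R, J.FG ∧ J ≤ I ∧ ∀ x ∈ I, s * x ∈ J)
    (I : Ideal R) :
    ∃ s ∈ S, ∃ (F : Type u) (_ : AddCommGroup F) (_ : Module R F),
      Module.FinitePresentation R F ∧
      ∃ f : F →ₗ[R] I,
        (∀ x ∈ LinearMap.ker f, s • x = 0) ∧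
        (∀ y : (↥I) ⧸ LinearMap.range f, s • y = 0) := by
  obtain ⟨s, hs, J, hJfg, hJI, hmulI⟩ := hSN I
  obtain ⟨n, a, ha⟩ := Submodule.fg_iff_exists_fin_generating_family.mp hJfg
  set φ₀ : (Fin n → R) →ₗ[R] R := Fintype.linearCombination R a with hφ₀
  have hrangeφ₀ : LinearMap.range φ₀ = J := by
    rw [hφ₀, Fintype.range_linearCombination, ha]
  have hmemI : ∀ c, φ₀ c ∈ I := fun c => hJI (hrangeφ₀ ▸ LinearMap.mem_range_self φ₀ c)
  set φ : (Fin n → R) →ₗ[R] I := φ₀.codRestrict I hmemI with hφ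
  obtain ⟨t, ht, T, hTfin, hTsub, hT⟩ := sfin_pi R S (sfin_base R S hSN) n (LinearMap.ker φ)
  set L : Submodule R (Fin n → R) := span R T with hL
  have hLker : L ≤ LinearMap.ker φ := span_le.mpr hTsub
  refine ⟨s * t, S.mul_mem hs ht, (Fin n → R) ⧸ L, inferInstance, inferInstance, ?_, ?_⟩
  · exact Module.finitePresentation_of_surjective L.mkQ L.mkQ_surjective
      (by rw [Submodule.ker_mkQ]; exact Submodule.fg_span hTfin)
  · refine ⟨L.liftQ φ hLker, ?_, ?_⟩
    · intro x hx
      rw [Submodule.ker_liftQ] at hx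
      obtain ⟨v, hv, rfl⟩ := hx
      have : t • v ∈ L := hT v hv
      have h0 : t • L.mkQ v = 0 := by
        rw [← map_smul, Submodule.mkQ_apply]
        exact (Submodule.Quotient.mk_eq_zero L).mpr this
      rw [mul_smul, h0, smul_zero]
    · intro y
      obtain ⟨z, rfl⟩ := Submodule.Quotient.mk_surjective _ y
      have hrange : LinearMap.range (L.liftQ φ hLker) = LinearMap.range φ :=
        Submodule.range_liftQ _ _ _
      have hsz : s • z ∈ LinearMap.range φ := by
        have : s * (z : R) ∈ J := hmulI z z.2
        rw [← hrangeφ₀] at this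
        obtain ⟨c, hc⟩ := this
        exact ⟨c, Subtype.ext (by simpa [hφ] using hc)⟩
      have : (s * t) • z ∈ LinearMap.range (L.liftQ φ hLker) := by
        rw [hrange, mul_comm, mul_smul]
        exact Submodule.smul_mem _ t hsz
      rw [← Submodule.Quotient.mk_smul, Submodule.Quotient.mk_eq_zero _ |>.mpr this]
end

section
/- Let R be a commutative ring, S and T multiplicative subsets of R, and M, N R-modules. Consider the natural R-module homomorphism φ_M : (Hom_R(M,N))_T → Hom_{R_T}(M_T, N_T) determined by φ_M(g/1)(m/1) = g(m)/1. If M is u-S-finitely presented, then φ_M is a u-S-isomorphism, i.e., both the kernel and the cokernel of φ_M are annihilated by some element of S. -/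
universe u

/-- If `mk n 1 = 0` in a localized module, then `mk n u = 0` for every `u`. -/
lemma aux_mk_zero {R : Type u} [CommRing R] (T : Submonoid R) {N : Type u}
    [AddCommGroup N] [Module R N] {n : N}
    (h : LocalizedModule.mk n (1 : T) = 0) (u : T) : LocalizedModule.mk n u = 0 := by
  rw [← LocalizedModule.zero_mk (1 : T), LocalizedModule.mk_eq] at h
  obtain ⟨c, hc⟩ := h
  simp only [one_smul, smul_zero] at hc
  rw [← LocalizedModule.zero_mk u, LocalizedModule.mk_eq]
  refine ⟨c, ?_⟩
  simp only [smul_zero, Submonoid.smul_def] at hc ⊢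
  rw [smul_comm, hc, smul_zero]

/-- Two `Localization T`-linear maps out of a localized module agreeing on the
elements `mk m 1` are equal. -/
lemma aux_ext {R : Type u} [CommRing R] (T : Submonoid R) {M N : Type u}
    [AddCommGroup M] [Module R M] [AddCommGroup N] [Module R N]
    (L₁ L₂ : LocalizedModule T M →ₗ[Localization T] LocalizedModule T N)
    (h : ∀ m : M, L₁ (LocalizedModule.mk m 1) = L₂ (LocalizedModule.mk m 1)) :
    L₁ = L₂ := by
  ext x
  induction x using LocalizedModule.induction_on with
  | _ m t =>
    have e : (Localization.mk (1 : R) t : Localization T) • LocalizedModule.mk m (1 : T)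
        = LocalizedModule.mk m t := by
      rw [LocalizedModule.mk_smul_mk, one_smul, mul_one]
    rw [← e, map_smul, map_smul, h]

/-- Let `R` be a commutative ring, `S, T` multiplicative subsets of `R`, and `M, N`
`R`-modules. If `M` is `u`-`S`-finitely presented, then the natural map
`φ_M : (Hom_R(M,N))_T → Hom_{R_T}(M_T, N_T)`, determined by
`φ_M(g/1)(m/1) = g(m)/1`, is a `u`-`S`-isomorphism: some `s ∈ S` annihilates its
kernel and its cokernel. -/
theorem uSfp_hom_localization_uS_isomorphism
    (R : Type u) [CommRing R] (S T : Submonoid R) (M N : Type u)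
    [AddCommGroup M] [Module R M] [AddCommGroup N] [Module R N]
    -- `M` is `u`-`S`-finitely presented
    (hM : ∃ s ∈ S, ∃ (F : Type u) (_ : AddCommGroup F) (_ : Module R F),
      Module.FinitePresentation R F ∧
      ∃ f : F →ₗ[R] M,
        (∀ x ∈ LinearMap.ker f, s • x = 0) ∧
        (∀ y : M ⧸ LinearMap.range f, s • y = 0))
    -- `φ` is the natural homomorphism `Hom_R(M,N)_T → Hom_{R_T}(M_T, N_T)`
    (φ : LocalizedModule T (M →ₗ[R] N) →
      (LocalizedModule T M →ₗ[Localization T] LocalizedModule T N))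
    (hadd : ∀ x y, φ (x + y) = φ x + φ y)
    (hsmul : ∀ (r : R) (x), φ (r • x) = (algebraMap R (Localization T) r) • φ x)
    (hnat : ∀ (g : M →ₗ[R] N) (m : M),
      φ (LocalizedModule.mk g 1) (LocalizedModule.mk m 1) = LocalizedModule.mk (g m) 1) :
    ∃ s ∈ S,
      (∀ x, φ x = 0 → s • x = 0) ∧
      (∀ ψ : LocalizedModule T M →ₗ[Localization T] LocalizedModule T N,
        ∃ x, (algebraMap R (Localization T) s) • ψ = φ x) := by
  obtain ⟨s, hs, F, _, _, hFP, f, hker, hcoker⟩ := hM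
  haveI := hFP
  -- every element of `M` becomes, after multiplication by `s`, an element of the range of `f`
  have hsurj : ∀ m : M, ∃ y : F, f y = s • m := by
    intro m
    have h0 : s • (Submodule.Quotient.mk m : M ⧸ LinearMap.range f) = 0 := hcoker _
    rw [← Submodule.Quotient.mk_smul, Submodule.Quotient.mk_eq_zero] at h0
    exact h0
  -- the localized hom module for the finitely presented `F`
  set Φ : (F →ₗ[R] N) →ₗ[R]
      (LocalizedModule T F →ₗ[R] LocalizedModule T N) :=
    IsLocalizedModule.map T (LocalizedModule.mkLinearMap T F)
      (LocalizedModule.mkLinearMap T N) with hΦ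
  haveI : IsLocalizedModule T Φ := Module.FinitePresentation.isLocalizedModule_map T _ _
  refine ⟨s * s * s, S.mul_mem (S.mul_mem hs hs) hs, ?_, ?_⟩
  · -- kernel part
    intro x hx
    obtain ⟨g, t, rfl⟩ : ∃ g t, x = LocalizedModule.mk g t := by
      induction x using LocalizedModule.induction_on with
      | _ g t => exact ⟨g, t, rfl⟩
    suffices hsx : s • LocalizedModule.mk g t = 0 by
      rw [mul_smul, hsx, smul_zero]
    -- `φ (mk g 1) = 0`
    have h1 : φ (LocalizedModule.mk g (1 : T)) = 0 := by
      have e : (t : R) • LocalizedModule.mk g t = LocalizedModule.mk g (1 : T) := by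
        rw [LocalizedModule.smul'_mk, ← Submonoid.smul_def, LocalizedModule.mk_cancel]
      rw [← e, hsmul, hx, smul_zero]
    have h2 : ∀ m : M, LocalizedModule.mk (g m) (1 : T) = 0 := by
      intro m
      rw [← hnat g m, h1, LinearMap.zero_apply]
    -- `Φ (g ∘ₗ f) = 0`
    have h3 : Φ (g ∘ₗ f) = 0 := by
      apply LinearMap.ext
      intro z
      induction z using LocalizedModule.induction_on with
      | _ y u =>
        rw [hΦ, IsLocalizedModule.map_LocalizedModules, LinearMap.zero_apply,
          LinearMap.comp_apply]
        exact aux_mk_zero T (h2 (f y)) u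
    obtain ⟨c, hc⟩ := IsLocalizedModule.exists_of_eq (S := T) (f := Φ)
      (x₁ := g ∘ₗ f) (x₂ := 0) (by rw [h3, map_zero])
    rw [smul_zero] at hc
    -- `c • (s • g) = 0` as a map `M → N`
    have h5 : (c : R) • (s • g) = 0 := by
      apply LinearMap.ext
      intro m
      obtain ⟨y, hy⟩ := hsurj m
      have h4 := LinearMap.congr_fun hc y
      rw [Submonoid.smul_def, LinearMap.smul_apply, LinearMap.comp_apply,
        LinearMap.zero_apply] at h4
      rw [LinearMap.smul_apply, LinearMap.smul_apply, ← map_smul, ← hy,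
        LinearMap.zero_apply, h4]
    rw [LocalizedModule.smul'_mk, ← LocalizedModule.zero_mk t, LocalizedModule.mk_eq]
    refine ⟨c, ?_⟩
    simp only [smul_zero, Submonoid.smul_def]
    rw [smul_comm, h5, smul_zero]
  · -- cokernel part
    intro ψ
    set Lf : LocalizedModule T F →ₗ[R] LocalizedModule T M :=
      IsLocalizedModule.map T (LocalizedModule.mkLinearMap T F)
        (LocalizedModule.mkLinearMap T M) f with hLf
    obtain ⟨⟨h, u⟩, hu⟩ := IsLocalizedModule.surj T Φ ((ψ.restrictScalars R) ∘ₗ Lf)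
    have hu' : ∀ y : F, (u : R) • ψ (LocalizedModule.mk (f y) (1 : T))
        = LocalizedModule.mk (h y) (1 : T) := by
      intro y
      have e := LinearMap.congr_fun hu (LocalizedModule.mk y (1 : T))
      rw [Submonoid.smul_def, LinearMap.smul_apply, LinearMap.comp_apply,
        LinearMap.restrictScalars_apply, hLf, hΦ,
        IsLocalizedModule.map_LocalizedModules,
        IsLocalizedModule.map_LocalizedModules] at e
      exact e
    -- descend `h` to a map on `M`
    have hwd : ∀ (y : F) (m : M), f y = s • m →
        s • h (hsurj m).choose = s • h y := by
      intro y m hy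
      have e1 : f ((hsurj m).choose - y) = 0 := by
        rw [map_sub, (hsurj m).choose_spec, hy, sub_self]
      have e2 := hker _ e1
      rw [smul_sub, sub_eq_zero] at e2
      rw [← map_smul, e2, map_smul]
    set g : M →ₗ[R] N :=
      { toFun := fun m => s • h (hsurj m).choose
        map_add' := fun m m' => by
          have e : f ((hsurj m).choose + (hsurj m').choose) = s • (m + m') := by
            rw [map_add, (hsurj m).choose_spec, (hsurj m').choose_spec, smul_add]
          show s • h (hsurj (m + m')).choose
            = s • h (hsurj m).choose + s • h (hsurj m').choose
          rw [hwd _ _ e, map_add, smul_add]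
        map_smul' := fun r m => by
          have e : f (r • (hsurj m).choose) = s • (r • m) := by
            rw [map_smul, (hsurj m).choose_spec, smul_comm]
          show s • h (hsurj (r • m)).choose = r • (s • h (hsurj m).choose)
          rw [hwd _ _ e, map_smul, smul_comm]
      } with hgdef
    have hgm : ∀ m : M, g m = s • h (hsurj m).choose := fun _ => rfl
    -- key pointwise computation
    have key : ∀ m : M, φ (LocalizedModule.mk (s • g) 1) (LocalizedModule.mk m 1)
        = (algebraMap R (Localization T) (s * s * s * (u : R))) •
          ψ (LocalizedModule.mk m 1) := by
      intro m
      have hy := (hsurj m).choose_spec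
      set y := (hsurj m).choose with hydef
      have e1 : LocalizedModule.mk (f y) (1 : T) = s • LocalizedModule.mk m (1 : T) := by
        rw [hy, LocalizedModule.smul'_mk]
      rw [hnat, LinearMap.smul_apply, hgm m, ← hydef, ← LocalizedModule.smul'_mk,
        ← LocalizedModule.smul'_mk, ← hu' y, e1, LinearMap.map_smul_of_tower,
        algebraMap_smul]
      rw [smul_smul, smul_smul, smul_smul]
      congr 1
      ring
    have key2 : φ (LocalizedModule.mk (s • g) 1)
        = (algebraMap R (Localization T) (s * s * s * (u : R))) • ψ :=
      aux_ext T _ _ (fun m => by rw [key m, LinearMap.smul_apply])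
    refine ⟨LocalizedModule.mk (s • g) u, ?_⟩
    -- cancel the unit `algebraMap u`
    have hunit : IsUnit (algebraMap R (Localization T) (u : R)) :=
      IsLocalization.map_units (Localization T) u
    have hcancel : ∀ a b : LocalizedModule T M →ₗ[Localization T] LocalizedModule T N,
        algebraMap R (Localization T) (u : R) • a
          = algebraMap R (Localization T) (u : R) • b → a = b := by
      intro a b hab
      calc a = (↑hunit.unit⁻¹ : Localization T) •
            (algebraMap R (Localization T) (u : R) • a) := by
              rw [← mul_smul, IsUnit.val_inv_mul, one_smul]
        _ = (↑hunit.unit⁻¹ : Localization T) •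
            (algebraMap R (Localization T) (u : R) • b) := by rw [hab]
        _ = b := by rw [← mul_smul, IsUnit.val_inv_mul, one_smul]
    apply hcancel
    rw [← hsmul]
    have e2 : (u : R) • LocalizedModule.mk (s • g) u = LocalizedModule.mk (s • g) (1 : T) := by
      rw [LocalizedModule.smul'_mk, ← Submonoid.smul_def, LocalizedModule.mk_cancel]
    rw [e2, key2, smul_smul, ← map_mul, mul_comm ((u : R)) (s * s * s)]
end

section
/- (Baer's Criterion for S-torsion-free modules) Let R be a commutative ring, S a multiplicative subset of R consisting of nonzerodivisors (a regular multiplicative subset), and E an S-torsion-free R-module. If there exists s ∈ S such that s·Ext¹_R(R/I, E) = 0 for every ideal I of R, then E is u-S-injective. -/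
open CategoryTheory

universe u

/-- The `n`-th Ext group of two `R`-modules, as an `R`-module. -/
noncomputable def extRMod (R : Type u) [CommRing R] (n : ℕ) (M N : ModuleCat.{u} R) :
    ModuleCat R :=
  ((Ext R (ModuleCat.{u} R) n).obj (Opposite.op M)).obj N

namespace BaerCritAux

variable {R : Type u} [CommRing R]

/-- Bridge: `t` kills `Ext¹(M, E')` iff every 1-cocycle of `Hom(P, E')` becomes a
coboundary after multiplication by `t`. -/
lemma bridge (M E' : ModuleCat.{u} R) (P : ProjectiveResolution M) (t : R) :
    (∀ x : extRMod R 1 M E', t • x = 0) ↔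
      ∀ ψ : P.complex.X 1 ⟶ E', P.complex.d 2 1 ≫ ψ = 0 →
        ∃ g₀ : P.complex.X 0 ⟶ E', P.complex.d 1 0 ≫ g₀ = t • ψ := by
  classical
  set K := P.complex.linearYonedaObj R E' with hK
  set S := K.sc' 0 1 2 with hS
  have e : extRMod R 1 M E' ≅ S.moduleCatLeftHomologyData.H :=
    P.isoExt 1 E' ≪≫ K.homologyIsoSc' 0 1 2 (by simp) (by simp) ≪≫ S.moduleCatHomologyIso
  have key : (∀ x : extRMod R 1 M E', t • x = 0) ↔
      (∀ y : S.moduleCatLeftHomologyData.H, t • y = 0) := by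
    constructor
    · intro h y
      have : y = e.hom (e.inv y) := (Iso.inv_hom_id_apply e y).symm
      rw [this, ← map_smul, h, map_zero]
    · intro h x
      have : x = e.inv (e.hom x) := (Iso.hom_inv_id_apply e x).symm
      rw [this, ← map_smul, h, map_zero]
  rw [key]
  have hg : ∀ ψ : P.complex.X 1 ⟶ E', S.g ψ = P.complex.d 2 1 ≫ ψ := fun ψ => rfl
  have hf : ∀ g₀ : P.complex.X 0 ⟶ E', S.f g₀ = P.complex.d 1 0 ≫ g₀ := fun g₀ => rfl
  constructor
  · intro h ψ hψ
    have hψ' : (show S.X₂ from ψ) ∈ LinearMap.ker S.g.hom := by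
      rw [LinearMap.mem_ker]
      exact (hg ψ).trans hψ
    have := h (Submodule.Quotient.mk ⟨ψ, hψ'⟩)
    replace this : (t • Submodule.Quotient.mk (p := LinearMap.range S.moduleCatToCycles) ⟨_, hψ'⟩) = 0 := this
    rw [← Submodule.Quotient.mk_smul, Submodule.Quotient.mk_eq_zero] at this
    obtain ⟨a, ha⟩ := this
    refine ⟨a, ?_⟩
    have hval := congrArg Subtype.val ha
    exact (hf a).symm.trans hval
  · intro h y
    obtain ⟨⟨ψ, hψ⟩, rfl⟩ := Submodule.Quotient.mk_surjective _ y
    show (t • Submodule.Quotient.mk (p := LinearMap.range S.moduleCatToCycles) ⟨ψ, hψ⟩) = 0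
    rw [← Submodule.Quotient.mk_smul, Submodule.Quotient.mk_eq_zero]
    have hψ0 : P.complex.d 2 1 ≫ ψ = 0 := (hg ψ).symm.trans hψ
    obtain ⟨g₀, hg₀⟩ := h ψ hψ0
    exact ⟨g₀, Subtype.ext ((hf g₀).trans hg₀)⟩

end BaerCritAux

/-- (Baer's Criterion for `S`-torsion-free modules) Let `R` be a commutative ring, `S` a
multiplicative subset of `R` consisting of nonzerodivisors, and `E` an `S`-torsion-free
`R`-module. If there exists `s ∈ S` such that `s • Ext¹_R(R/I, E) = 0` for every ideal
`I` of `R`, then `E` is `u`-`S`-injective. -/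
theorem baer_criterion_S_torsionFree
    (R : Type u) [CommRing R] (S : Submonoid R)
    (hreg : ∀ s ∈ S, ∀ r : R, s * r = 0 → r = 0)
    (E : Type u) [AddCommGroup E] [Module R E]
    (htf : ∀ s ∈ S, ∀ x : E, s • x = 0 → x = 0)
    (hBaer : ∃ s ∈ S, ∀ I : Ideal R,
      ∀ x : extRMod R 1 (ModuleCat.of R (R ⧸ I)) (ModuleCat.of R E), s • x = 0) :
    ∀ M : ModuleCat.{u} R, ∃ s ∈ S,
      ∀ x : extRMod R 1 M (ModuleCat.of R E), s • x = 0 := by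
  classical
  obtain ⟨s, hsS, hs⟩ := hBaer
  set E' : ModuleCat.{u} R := ModuleCat.of R E with hE'
  -- Step A : partial Baer property with multiplier `s`.
  have stepA : ∀ (I : Ideal R) (φ : I →ₗ[R] E), ∃ y : E,
      ∀ r (hr : r ∈ I), s • φ ⟨r, hr⟩ = r • y := by
    intro I φ
    set MI : ModuleCat.{u} R := ModuleCat.of R (R ⧸ I) with hMI
    obtain ⟨P⟩ : Nonempty (ProjectiveResolution MI) := HasProjectiveResolution.out
    set quotHom : ModuleCat.of R R ⟶ MI := ModuleCat.ofHom I.mkQ with hquot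
    haveI : Epi quotHom := (ModuleCat.epi_iff_surjective _).2 (Submodule.mkQ_surjective I)
    set π' : P.complex.X 0 ⟶ MI := P.π.f 0 with hπ'
    set α : P.complex.X 0 ⟶ ModuleCat.of R R := Projective.factorThru π' quotHom with hα
    set αl : ↑(P.complex.X 0) →ₗ[R] R := α.hom with hαl
    have hαc : α ≫ quotHom = π' := Projective.factorThru_comp _ _
    have hαapp : ∀ p : P.complex.X 0, I.mkQ (αl p) = π' p := fun p =>
      ConcreteCategory.congr_hom hαc p
    have hdπ : ∀ x : P.complex.X 1, π' (P.complex.d 1 0 x) = 0 := by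
      intro x
      have h0 : P.complex.d 1 0 ≫ π' = 0 := P.complex_d_comp_π_f_zero
      simpa using ConcreteCategory.congr_hom h0 x
    have hmem : ∀ x : P.complex.X 1, αl (P.complex.d 1 0 x) ∈ I := by
      intro x
      rw [← Submodule.Quotient.mk_eq_zero, ← Submodule.mkQ_apply]
      exact (hαapp _).trans (hdπ _)
    set β : ↑(P.complex.X 1) →ₗ[R] I :=
      LinearMap.codRestrict (I : Submodule R R)
        (αl.comp (P.complex.d 1 0).hom)
        hmem with hβ
    have hβval : ∀ x : P.complex.X 1, (β x : R) = αl (P.complex.d 1 0 x) := fun x => rfl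
    set ψ : P.complex.X 1 ⟶ E' := ModuleCat.ofHom (φ.comp β) with hψdef
    have hψapp : ∀ x : P.complex.X 1, ψ x = φ (β x) := fun x => rfl
    have hψcoc : P.complex.d 2 1 ≫ ψ = 0 := by
      refine ModuleCat.hom_ext (LinearMap.ext fun x => ?_)
      have hdd : P.complex.d 1 0 (P.complex.d 2 1 x) = 0 :=
        ConcreteCategory.congr_hom (P.complex.d_comp_d 2 1 0) x
      have hβ0 : β (P.complex.d 2 1 x) = 0 := by
        apply Subtype.ext
        rw [hβval, hdd, map_zero]
        rfl
      show ψ (P.complex.d 2 1 x) = 0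
      rw [hψapp, hβ0, map_zero]
    obtain ⟨g₀, hg₀⟩ := (BaerCritAux.bridge MI E' P s).1 (hs I) ψ hψcoc
    set g₀l : ↑(P.complex.X 0) →ₗ[R] E := g₀.hom with hg₀l
    have hg₀app : ∀ x : P.complex.X 1, g₀l (P.complex.d 1 0 x) = s • φ (β x) :=
      fun x => ConcreteCategory.congr_hom hg₀ x
    have hπsurj : Function.Surjective π' := by
      rw [← ModuleCat.epi_iff_surjective]
      exact (inferInstance : Epi (P.π.f 0))
    have hexact0 : ∀ p : P.complex.X 0, π' p = 0 → ∃ x, P.complex.d 1 0 x = p := by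
      have h := P.exact₀
      rw [ShortComplex.moduleCat_exact_iff] at h
      exact fun p hp => h p hp
    set σ : (↑(P.complex.X 0) × ↥I) →ₗ[R] R := LinearMap.coprod αl I.subtype with hσ
    set Φ : (↑(P.complex.X 0) × ↥I) →ₗ[R] E := LinearMap.coprod g₀l (s • φ) with hΦ
    have hσapp : ∀ (p : ↑(P.complex.X 0)) (a : I), σ (p, a) = αl p + (a : R) :=
      fun p a => rfl
    have hΦapp : ∀ (p : ↑(P.complex.X 0)) (a : I), Φ (p, a) = g₀l p + s • φ a :=
      fun p a => rfl
    have hσsurj : Function.Surjective σ := by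
      intro r
      obtain ⟨p, hp⟩ := hπsurj (I.mkQ r)
      have hi : r - αl p ∈ I := by
        rw [← Submodule.Quotient.mk_eq_zero, ← Submodule.mkQ_apply, map_sub, hαapp, hp,
          sub_self]
      exact ⟨(p, ⟨r - αl p, hi⟩), by rw [hσapp]; ring⟩
    have hker : ∀ v, σ v = 0 → Φ v = 0 := by
      rintro ⟨p, a⟩ hv
      have hv' : αl p + (a : R) = 0 := (hσapp p a).symm.trans hv
      have hπp : π' p = 0 := by
        rw [← hαapp, eq_neg_of_add_eq_zero_left hv', map_neg, Submodule.mkQ_apply,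
          neg_eq_zero]
        exact (Submodule.Quotient.mk_eq_zero I).2 a.2
      obtain ⟨x, hx⟩ := hexact0 p hπp
      have hgp : g₀l p = s • φ (β x) := by rw [← hx]; exact hg₀app x
      have hba : β x + a = 0 := by
        apply Subtype.ext
        show (β x : R) + (a : R) = 0
        rw [hβval x, hx]
        exact hv'
      rw [hΦapp, hgp, ← smul_add, ← map_add, hba, map_zero, smul_zero]
    obtain ⟨t₁, ht₁⟩ := hσsurj 1
    refine ⟨Φ t₁, ?_⟩
    intro r hr
    have h0 : σ (r • t₁ - ((0 : ↑(P.complex.X 0)), (⟨r, hr⟩ : I))) = 0 := by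
      rw [map_sub, map_smul, ht₁, hσapp]
      simp
    have h1 := hker _ h0
    rw [map_sub, map_smul, sub_eq_zero] at h1
    have h2 : Φ ((0 : ↑(P.complex.X 0)), (⟨r, hr⟩ : I)) = s • φ ⟨r, hr⟩ := by
      rw [hΦapp, map_zero, zero_add]
    exact (h2.symm.trans h1.symm)
  -- Step B : `E` is `s`-divisible.
  have stepDiv : ∀ x : E, ∃ y : E, x = s • y := by
    intro x
    set I : Ideal R := Ideal.span {s * s} with hI
    have hmm : ∀ r : R, r • (s * s) ∈ I := fun r =>
      Ideal.mem_span_singleton.2 (Dvd.intro_left r rfl)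
    set m : R →ₗ[R] I :=
      LinearMap.codRestrict (I : Submodule R R) (LinearMap.toSpanSingleton R R (s * s)) hmm
      with hm
    have hss2 : s * s ∈ S := S.mul_mem hsS hsS
    have hminj : Function.Injective m := by
      intro a b hab
      have h := congrArg Subtype.val hab
      simp only [hm, LinearMap.codRestrict_apply, LinearMap.toSpanSingleton_apply,
        smul_eq_mul] at h
      have h2 : (s * s) * (a - b) = 0 := by
        rw [mul_sub, mul_comm (s * s) a, mul_comm (s * s) b, (show a * (s * s) = b * (s * s) from h), sub_self]
      exact sub_eq_zero.1 (hreg (s * s) hss2 (a - b) h2)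
    have hmsurj : Function.Surjective m := by
      rintro ⟨z, hz⟩
      obtain ⟨c, hc⟩ := Ideal.mem_span_singleton.1 hz
      refine ⟨c, Subtype.ext ?_⟩
      simp only [hm, LinearMap.codRestrict_apply, LinearMap.toSpanSingleton_apply,
        smul_eq_mul]
      show c * (s * s) = z
      rw [hc, mul_comm]
    set μ : R ≃ₗ[R] I := LinearEquiv.ofBijective m ⟨hminj, hmsurj⟩ with hμ
    set φ : I →ₗ[R] E := (LinearMap.toSpanSingleton R E x).comp (μ.symm : I →ₗ[R] R) with hφ
    obtain ⟨y, hy⟩ := stepA I φ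
    have hss : s * s ∈ I := Ideal.mem_span_singleton_self _
    have h1 := hy (s * s) hss
    have hμ1 : μ.symm ⟨s * s, hss⟩ = 1 := by
      rw [LinearEquiv.symm_apply_eq]
      apply Subtype.ext
      simp [hμ, hm, LinearEquiv.ofBijective_apply, LinearMap.toSpanSingleton_apply]
      exact (one_mul (s * s)).symm
    have hφval : φ ⟨s * s, hss⟩ = x := by
      have h2 : φ ⟨s * s, hss⟩ = (μ.symm ⟨s * s, hss⟩ : R) • x := by
        simp [hφ, LinearMap.toSpanSingleton_apply]
      rw [h2, hμ1, one_smul]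
    rw [hφval, mul_smul] at h1
    refine ⟨y, ?_⟩
    have h3 := htf s hsS (x - s • y) (by rw [smul_sub, h1, sub_self])
    exact sub_eq_zero.1 h3
  -- Step C : `E` satisfies Baer's criterion, hence is injective.
  have hbaer : Module.Baer R E := by
    intro I φ
    obtain ⟨y, hy⟩ := stepA I φ
    obtain ⟨y', hy'⟩ := stepDiv y
    refine ⟨LinearMap.toSpanSingleton R E y', ?_⟩
    intro r hr
    have h1 : s • φ ⟨r, hr⟩ = r • y := hy r hr
    rw [hy', smul_comm r s y'] at h1
    have h2 := htf s hsS (φ ⟨r, hr⟩ - r • y')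
      (by rw [smul_sub, h1, sub_self])
    rw [LinearMap.toSpanSingleton_apply]
    exact (sub_eq_zero.1 h2).symm
  -- Final step : `Ext¹(M, E) = 0` for every `M`.
  intro M
  refine ⟨s, hsS, ?_⟩
  obtain ⟨P⟩ : Nonempty (ProjectiveResolution M) := HasProjectiveResolution.out
  rw [BaerCritAux.bridge M E' P s]
  intro ψ hψ
  have hexact1 : ∀ x : P.complex.X 1, P.complex.d 1 0 x = 0 →
      ∃ y : P.complex.X 2, P.complex.d 2 1 y = x := by
    have h := P.exact_succ 0
    rw [ShortComplex.moduleCat_exact_iff] at h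
    exact fun x hx => h x hx
  have hkerψ : LinearMap.ker (P.complex.d 1 0).hom ≤
      LinearMap.ker ψ.hom := by
    intro x hx
    obtain ⟨y, hy⟩ := hexact1 x hx
    have h := ConcreteCategory.congr_hom hψ y
    rw [LinearMap.mem_ker]
    rw [← hy]
    exact h
  set d' : (↑(P.complex.X 1) ⧸
      LinearMap.ker (P.complex.d 1 0).hom) →ₗ[R]
      ↑(P.complex.X 0) :=
    Submodule.liftQ _ (P.complex.d 1 0).hom le_rfl
    with hd'
  have hd'inj : Function.Injective d' := by
    rw [← LinearMap.ker_eq_bot]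
    exact Submodule.ker_liftQ_eq_bot _ _ _ le_rfl
  set ψ' := Submodule.liftQ _ ψ.hom hkerψ with hψ'
  obtain ⟨h, hh⟩ := hbaer.extension_property d' hd'inj ψ'
  refine ⟨ModuleCat.ofHom (s • h), ?_⟩
  refine ModuleCat.hom_ext (LinearMap.ext fun x => ?_)
  show (s • h) (P.complex.d 1 0 x) = (s • ψ) x
  have e1 : P.complex.d 1 0 x = d' (Submodule.Quotient.mk x) := rfl
  rw [LinearMap.smul_apply, e1]
  have h3 := DFunLike.congr_fun hh (Submodule.Quotient.mk x)
  rw [LinearMap.comp_apply] at h3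
  rw [h3]
  rfl
end

section
/- (u-S-Five Lemma, part 1) Let R be a commutative ring and S a multiplicative subset of R. Consider a commutative diagram of R-modules with rows A → B → C → D → E and A' → B' → C' → D' → E' that are u-S-exact at B, C, D (resp. B', C', D'), and vertical maps f_A, f_B, f_C, f_D, f_E. If f_B and f_D are u-S-monomorphisms and f_A is a u-S-epimorphism, then f_C is a u-S-monomorphism. -/
universe u

/-- (u-S-Five Lemma, part 1) If `f_B` and `f_D` are `u`-`S`-monomorphisms and `f_A` is a
`u`-`S`-epimorphism, then `f_C` is a `u`-`S`-monomorphism. -/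
theorem uS_five_lemma_mono
    (R : Type u) [CommRing R] (S : Submonoid R)
    (A B C D E A' B' C' D' E' : Type u)
    [AddCommGroup A] [Module R A] [AddCommGroup B] [Module R B]
    [AddCommGroup C] [Module R C] [AddCommGroup D] [Module R D]
    [AddCommGroup E] [Module R E]
    [AddCommGroup A'] [Module R A'] [AddCommGroup B'] [Module R B']
    [AddCommGroup C'] [Module R C'] [AddCommGroup D'] [Module R D']
    [AddCommGroup E'] [Module R E']
    (g1 : A →ₗ[R] B) (g2 : B →ₗ[R] C) (g3 : C →ₗ[R] D) (g4 : D →ₗ[R] E)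
    (h1 : A' →ₗ[R] B') (h2 : B' →ₗ[R] C') (h3 : C' →ₗ[R] D') (h4 : D' →ₗ[R] E')
    (fA : A →ₗ[R] A') (fB : B →ₗ[R] B') (fC : C →ₗ[R] C') (fD : D →ₗ[R] D')
    (fE : E →ₗ[R] E')
    -- commutativity of the diagram
    (sq1 : fB ∘ₗ g1 = h1 ∘ₗ fA) (sq2 : fC ∘ₗ g2 = h2 ∘ₗ fB)
    (sq3 : fD ∘ₗ g3 = h3 ∘ₗ fC) (sq4 : fE ∘ₗ g4 = h4 ∘ₗ fD)
    -- the top row is u-S-exact at B, C, D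
    (extB : ∃ s ∈ S, (∀ x ∈ LinearMap.ker g2, s • x ∈ LinearMap.range g1) ∧
      (∀ x ∈ LinearMap.range g1, s • x ∈ LinearMap.ker g2))
    (extC : ∃ s ∈ S, (∀ x ∈ LinearMap.ker g3, s • x ∈ LinearMap.range g2) ∧
      (∀ x ∈ LinearMap.range g2, s • x ∈ LinearMap.ker g3))
    (extD : ∃ s ∈ S, (∀ x ∈ LinearMap.ker g4, s • x ∈ LinearMap.range g3) ∧
      (∀ x ∈ LinearMap.range g3, s • x ∈ LinearMap.ker g4))
    -- the bottom row is u-S-exact at B', C', D'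
    (exbB : ∃ s ∈ S, (∀ x ∈ LinearMap.ker h2, s • x ∈ LinearMap.range h1) ∧
      (∀ x ∈ LinearMap.range h1, s • x ∈ LinearMap.ker h2))
    (exbC : ∃ s ∈ S, (∀ x ∈ LinearMap.ker h3, s • x ∈ LinearMap.range h2) ∧
      (∀ x ∈ LinearMap.range h2, s • x ∈ LinearMap.ker h3))
    (exbD : ∃ s ∈ S, (∀ x ∈ LinearMap.ker h4, s • x ∈ LinearMap.range h3) ∧
      (∀ x ∈ LinearMap.range h3, s • x ∈ LinearMap.ker h4))
    -- f_B and f_D are u-S-monomorphisms, f_A is a u-S-epimorphism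
    (hfB : ∃ s ∈ S, ∀ x : B, fB x = 0 → s • x = 0)
    (hfD : ∃ s ∈ S, ∀ x : D, fD x = 0 → s • x = 0)
    (hfA : ∃ s ∈ S, ∀ y : A', ∃ x : A, s • y = fA x) :
    -- f_C is a u-S-monomorphism
    ∃ s ∈ S, ∀ x : C, fC x = 0 → s • x = 0 := by
  obtain ⟨sD, hsD, hD⟩ := hfD
  obtain ⟨sC, hsC, hC1, hC2⟩ := extC
  obtain ⟨sbB, hsbB, hbB1, hbB2⟩ := exbB
  obtain ⟨sA, hsA, hA⟩ := hfA
  obtain ⟨sfB, hsfB, hB⟩ := hfB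
  obtain ⟨stB, hstB, htB1, htB2⟩ := extB
  refine ⟨stB * sfB * sA * sbB * sC * sD,
    mul_mem (mul_mem (mul_mem (mul_mem (mul_mem hstB hsfB) hsA) hsbB) hsC) hsD, ?_⟩
  intro x hx
  -- fD (g3 x) = 0
  have e1 : fD (g3 x) = 0 := by
    have := LinearMap.congr_fun sq3 x
    simp only [LinearMap.comp_apply] at this
    rw [this, hx, map_zero]
  -- sD • g3 x = 0, so g3 (sD • x) = 0
  have e2 : g3 (sD • x) = 0 := by rw [map_smul]; exact hD _ e1
  obtain ⟨b, hb⟩ := hC1 (sD • x) e2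
  -- hb : g2 b = sC • sD • x
  have e3 : fC (g2 b) = 0 := by rw [hb, map_smul, map_smul, hx, smul_zero, smul_zero]
  have e4 : h2 (fB b) = 0 := by
    have := LinearMap.congr_fun sq2 b
    simp only [LinearMap.comp_apply] at this
    rw [← this, e3]
  obtain ⟨a', ha'⟩ := hbB1 (fB b) e4
  -- ha' : h1 a' = sbB • fB b
  obtain ⟨a, ha⟩ := hA a'
  -- ha : sA • a' = fA a
  have e5 : fB (g1 a - (sA * sbB) • b) = 0 := by
    have hc := LinearMap.congr_fun sq1 a
    simp only [LinearMap.comp_apply] at hc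
    rw [map_sub, hc, ← ha, map_smul, ha', map_smul, smul_smul, sub_self]
  have e6 : sfB • (g1 a - (sA * sbB) • b) = 0 := hB _ e5
  have e7 : (sfB * (sA * sbB)) • b = g1 (sfB • a) := by
    rw [smul_sub] at e6
    rw [map_smul, sub_eq_zero.mp e6, smul_smul]
  have e8 : (stB * (sfB * (sA * sbB))) • b ∈ LinearMap.ker g2 := by
    rw [smul_smul] at *
    have := htB2 ((sfB * (sA * sbB)) • b) ⟨sfB • a, e7.symm⟩
    rwa [smul_smul] at this
  have e9 : g2 ((stB * (sfB * (sA * sbB))) • b) = 0 := e8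
  rw [map_smul, hb, smul_smul, smul_smul] at e9
  calc (stB * sfB * sA * sbB * sC * sD) • x
      = (stB * (sfB * (sA * sbB)) * sC * sD) • x := by ring_nf
    _ = 0 := e9
end

section
/- (u-S-Five Lemma, part 2) Let R be a commutative ring and S a multiplicative subset of R. Consider a commutative diagram of R-modules with rows A → B → C → D → E and A' → B' → C' → D' → E' that are u-S-exact at B, C, D (resp. B', C', D'), and vertical maps f_A, f_B, f_C, f_D, f_E. If f_B and f_D are u-S-epimorphisms and f_E is a u-S-monomorphism, then f_C is a u-S-epimorphism. -/
universe u

/-- (u-S-Five Lemma, part 2) If `f_B` and `f_D` are `u`-`S`-epimorphisms and `f_E` is a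
`u`-`S`-monomorphism, then `f_C` is a `u`-`S`-epimorphism. -/
theorem uS_five_lemma_epi
    (R : Type u) [CommRing R] (S : Submonoid R)
    (A B C D E A' B' C' D' E' : Type u)
    [AddCommGroup A] [Module R A] [AddCommGroup B] [Module R B]
    [AddCommGroup C] [Module R C] [AddCommGroup D] [Module R D]
    [AddCommGroup E] [Module R E]
    [AddCommGroup A'] [Module R A'] [AddCommGroup B'] [Module R B']
    [AddCommGroup C'] [Module R C'] [AddCommGroup D'] [Module R D']
    [AddCommGroup E'] [Module R E']
    (g1 : A →ₗ[R] B) (g2 : B →ₗ[R] C) (g3 : C →ₗ[R] D) (g4 : D →ₗ[R] E)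
    (h1 : A' →ₗ[R] B') (h2 : B' →ₗ[R] C') (h3 : C' →ₗ[R] D') (h4 : D' →ₗ[R] E')
    (fA : A →ₗ[R] A') (fB : B →ₗ[R] B') (fC : C →ₗ[R] C') (fD : D →ₗ[R] D')
    (fE : E →ₗ[R] E')
    -- commutativity of the diagram
    (sq1 : fB ∘ₗ g1 = h1 ∘ₗ fA) (sq2 : fC ∘ₗ g2 = h2 ∘ₗ fB)
    (sq3 : fD ∘ₗ g3 = h3 ∘ₗ fC) (sq4 : fE ∘ₗ g4 = h4 ∘ₗ fD)
    -- the top row is u-S-exact at B, C, D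
    (extB : ∃ s ∈ S, (∀ x ∈ LinearMap.ker g2, s • x ∈ LinearMap.range g1) ∧
      (∀ x ∈ LinearMap.range g1, s • x ∈ LinearMap.ker g2))
    (extC : ∃ s ∈ S, (∀ x ∈ LinearMap.ker g3, s • x ∈ LinearMap.range g2) ∧
      (∀ x ∈ LinearMap.range g2, s • x ∈ LinearMap.ker g3))
    (extD : ∃ s ∈ S, (∀ x ∈ LinearMap.ker g4, s • x ∈ LinearMap.range g3) ∧
      (∀ x ∈ LinearMap.range g3, s • x ∈ LinearMap.ker g4))
    -- the bottom row is u-S-exact at B', C', D'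
    (exbB : ∃ s ∈ S, (∀ x ∈ LinearMap.ker h2, s • x ∈ LinearMap.range h1) ∧
      (∀ x ∈ LinearMap.range h1, s • x ∈ LinearMap.ker h2))
    (exbC : ∃ s ∈ S, (∀ x ∈ LinearMap.ker h3, s • x ∈ LinearMap.range h2) ∧
      (∀ x ∈ LinearMap.range h2, s • x ∈ LinearMap.ker h3))
    (exbD : ∃ s ∈ S, (∀ x ∈ LinearMap.ker h4, s • x ∈ LinearMap.range h3) ∧
      (∀ x ∈ LinearMap.range h3, s • x ∈ LinearMap.ker h4))
    -- f_B and f_D are u-S-epimorphisms, f_E is a u-S-monomorphism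
    (hfB : ∃ s ∈ S, ∀ y : B', ∃ x : B, s • y = fB x)
    (hfD : ∃ s ∈ S, ∀ y : D', ∃ x : D, s • y = fD x)
    (hfE : ∃ s ∈ S, ∀ x : E, fE x = 0 → s • x = 0) :
    -- f_C is a u-S-epimorphism
    ∃ s ∈ S, ∀ y : C', ∃ x : C, s • y = fC x := by
  obtain ⟨sD, hsD, hDsur⟩ := hfD
  obtain ⟨sE, hsE, hEinj⟩ := hfE
  obtain ⟨tD, htD, htD1, -⟩ := extD
  obtain ⟨tD', htD', -, htD2'⟩ := exbD
  obtain ⟨tC', htC', htC1', -⟩ := exbC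
  obtain ⟨sB, hsB, hBsur⟩ := hfB
  refine ⟨sB * tC' * tD * sE * tD' * sD,
    S.mul_mem (S.mul_mem (S.mul_mem (S.mul_mem (S.mul_mem hsB htC') htD) hsE) htD') hsD, ?_⟩
  intro c'
  obtain ⟨d, hd⟩ := hDsur (h3 c')
  have hker4 : h4 (tD' • h3 c') = 0 := htD2' (h3 c') ⟨c', rfl⟩
  have hE0 : fE (g4 (tD' • d)) = 0 := by
    have := LinearMap.congr_fun sq4 (tD' • d)
    simp only [LinearMap.comp_apply] at this
    rw [this, map_smul, ← hd, smul_comm, map_smul, hker4, smul_zero]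
  have hgd : g4 ((sE * tD') • d) = 0 := by
    have := hEinj _ hE0
    rw [← map_smul] at this
    rwa [mul_smul]
  obtain ⟨c, hc⟩ := htD1 ((sE * tD') • d) hgd
  rw [← mul_smul] at hc
  -- hc : g3 c = (tD * (sE * tD')) • d
  have hC' : h3 ((tD * (sE * tD') * sD) • c' - fC c) = 0 := by
    have hsq3 := LinearMap.congr_fun sq3 c
    simp only [LinearMap.comp_apply] at hsq3
    rw [map_sub, map_smul, ← hsq3, hc, map_smul, ← hd, ← mul_smul, sub_self]
  obtain ⟨b', hb'⟩ := htC1' _ hC'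
  obtain ⟨b, hb⟩ := hBsur b'
  refine ⟨g2 b + (sB * tC') • c, ?_⟩
  have hsq2 := LinearMap.congr_fun sq2 b
  simp only [LinearMap.comp_apply] at hsq2
  rw [map_add, map_smul, hsq2, ← hb, map_smul, hb']
  module
end

section
/- (u-S-Five Lemma, part 4) Let R be a commutative ring and S a multiplicative subset of R. Consider a commutative diagram of R-modules with rows A → B → C → D → E and A' → B' → C' → D' → E' that are u-S-exact at B, C, D (resp. B', C', D'), and vertical maps f_A, f_B, f_C, f_D, f_E. If f_A, f_B, f_D and f_E are all u-S-isomorphisms, then f_C is a u-S-isomorphism. -/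
universe u

/-- (u-S-Five Lemma, part 4) If `f_A`, `f_B`, `f_D` and `f_E` are all
`u`-`S`-isomorphisms, then `f_C` is a `u`-`S`-isomorphism. -/
theorem uS_five_lemma_iso
    (R : Type u) [CommRing R] (S : Submonoid R)
    (A B C D E A' B' C' D' E' : Type u)
    [AddCommGroup A] [Module R A] [AddCommGroup B] [Module R B]
    [AddCommGroup C] [Module R C] [AddCommGroup D] [Module R D]
    [AddCommGroup E] [Module R E]
    [AddCommGroup A'] [Module R A'] [AddCommGroup B'] [Module R B']
    [AddCommGroup C'] [Module R C'] [AddCommGroup D'] [Module R D']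
    [AddCommGroup E'] [Module R E']
    (g1 : A →ₗ[R] B) (g2 : B →ₗ[R] C) (g3 : C →ₗ[R] D) (g4 : D →ₗ[R] E)
    (h1 : A' →ₗ[R] B') (h2 : B' →ₗ[R] C') (h3 : C' →ₗ[R] D') (h4 : D' →ₗ[R] E')
    (fA : A →ₗ[R] A') (fB : B →ₗ[R] B') (fC : C →ₗ[R] C') (fD : D →ₗ[R] D')
    (fE : E →ₗ[R] E')
    -- commutativity of the diagram
    (sq1 : fB ∘ₗ g1 = h1 ∘ₗ fA) (sq2 : fC ∘ₗ g2 = h2 ∘ₗ fB)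
    (sq3 : fD ∘ₗ g3 = h3 ∘ₗ fC) (sq4 : fE ∘ₗ g4 = h4 ∘ₗ fD)
    -- the top row is u-S-exact at B, C, D
    (extB : ∃ s ∈ S, (∀ x ∈ LinearMap.ker g2, s • x ∈ LinearMap.range g1) ∧
      (∀ x ∈ LinearMap.range g1, s • x ∈ LinearMap.ker g2))
    (extC : ∃ s ∈ S, (∀ x ∈ LinearMap.ker g3, s • x ∈ LinearMap.range g2) ∧
      (∀ x ∈ LinearMap.range g2, s • x ∈ LinearMap.ker g3))
    (extD : ∃ s ∈ S, (∀ x ∈ LinearMap.ker g4, s • x ∈ LinearMap.range g3) ∧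
      (∀ x ∈ LinearMap.range g3, s • x ∈ LinearMap.ker g4))
    -- the bottom row is u-S-exact at B', C', D'
    (exbB : ∃ s ∈ S, (∀ x ∈ LinearMap.ker h2, s • x ∈ LinearMap.range h1) ∧
      (∀ x ∈ LinearMap.range h1, s • x ∈ LinearMap.ker h2))
    (exbC : ∃ s ∈ S, (∀ x ∈ LinearMap.ker h3, s • x ∈ LinearMap.range h2) ∧
      (∀ x ∈ LinearMap.range h2, s • x ∈ LinearMap.ker h3))
    (exbD : ∃ s ∈ S, (∀ x ∈ LinearMap.ker h4, s • x ∈ LinearMap.range h3) ∧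
      (∀ x ∈ LinearMap.range h3, s • x ∈ LinearMap.ker h4))
    -- f_A, f_B, f_D, f_E are u-S-isomorphisms
    (hfA : (∃ s ∈ S, ∀ x : A, fA x = 0 → s • x = 0) ∧
      (∃ s ∈ S, ∀ y : A', ∃ x : A, s • y = fA x))
    (hfB : (∃ s ∈ S, ∀ x : B, fB x = 0 → s • x = 0) ∧
      (∃ s ∈ S, ∀ y : B', ∃ x : B, s • y = fB x))
    (hfD : (∃ s ∈ S, ∀ x : D, fD x = 0 → s • x = 0) ∧
      (∃ s ∈ S, ∀ y : D', ∃ x : D, s • y = fD x))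
    (hfE : (∃ s ∈ S, ∀ x : E, fE x = 0 → s • x = 0) ∧
      (∃ s ∈ S, ∀ y : E', ∃ x : E, s • y = fE x)) :
    -- f_C is a u-S-isomorphism
    (∃ s ∈ S, ∀ x : C, fC x = 0 → s • x = 0) ∧
      (∃ s ∈ S, ∀ y : C', ∃ x : C, s • y = fC x) := by
  obtain ⟨⟨uB, huBS, huB⟩, ⟨tB, htBS, htB⟩⟩ := hfB
  obtain ⟨_, ⟨tA, htAS, htA⟩⟩ := hfA
  obtain ⟨⟨sD, hsDS, hsD⟩, ⟨tD, htDS, htD⟩⟩ := hfD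
  obtain ⟨⟨uE, huES, huE⟩, _⟩ := hfE
  obtain ⟨sB, hsBS, _, hB2⟩ := extB
  obtain ⟨sC, hsCS, hC1, _⟩ := extC
  obtain ⟨σD, hσDS, hD1, _⟩ := extD
  obtain ⟨s'B, hs'BS, hB'1, _⟩ := exbB
  obtain ⟨σ'C, hσ'CS, hC'1, _⟩ := exbC
  obtain ⟨s'D, hs'DS, _, hD'2⟩ := exbD
  constructor
  · -- injectivity part
    refine ⟨sB * (uB * (tA * s'B)) * sC * sD,
      S.mul_mem (S.mul_mem (S.mul_mem hsBS (S.mul_mem huBS (S.mul_mem htAS hs'BS))) hsCS) hsDS,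
      ?_⟩
    intro x hx
    have e0 : fD (g3 x) = 0 := by
      have h := LinearMap.congr_fun sq3 x
      simp only [LinearMap.comp_apply] at h
      rw [h, hx, map_zero]
    have e1 : g3 (sD • x) = 0 := by rw [map_smul]; exact hsD _ e0
    obtain ⟨b, hb⟩ := hC1 (sD • x) (LinearMap.mem_ker.mpr e1)
    -- hb : g2 b = sC • sD • x
    have e2 : h2 (fB b) = 0 := by
      have h := LinearMap.congr_fun sq2 b
      simp only [LinearMap.comp_apply] at h
      rw [← h, hb, map_smul, map_smul, hx, smul_zero, smul_zero]
    obtain ⟨a', ha'⟩ := hB'1 (fB b) (LinearMap.mem_ker.mpr e2)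
    -- ha' : h1 a' = s'B • fB b
    obtain ⟨a, ha⟩ := htA a'
    -- ha : tA • a' = fA a
    have L : fB (g1 a) = tA • s'B • fB b := by
      have h := LinearMap.congr_fun sq1 a
      simp only [LinearMap.comp_apply] at h
      rw [h, ← ha, map_smul, ha']
    have e3 : fB (g1 a - (tA * s'B) • b) = 0 := by
      rw [map_sub, L, map_smul, mul_smul, sub_self]
    have e4 := huB _ e3
    rw [smul_sub] at e4
    have e5 : g1 (uB • a) = (uB * (tA * s'B)) • b := by
      rw [map_smul, mul_smul]
      exact sub_eq_zero.mp e4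
    have e6 : g2 ((sB * (uB * (tA * s'B))) • b) = 0 := by
      rw [mul_smul, ← e5]
      exact LinearMap.mem_ker.mp (hB2 _ ⟨uB • a, rfl⟩)
    have e7 : (sB * (uB * (tA * s'B))) • (sC • sD • x) = 0 := by
      rw [← hb, ← map_smul]; exact e6
    simpa [smul_smul, mul_assoc] using e7
  · -- surjectivity part
    refine ⟨tB * σ'C * (σD * (uE * s'D) * tD),
      S.mul_mem (S.mul_mem htBS hσ'CS)
        (S.mul_mem (S.mul_mem hσDS (S.mul_mem huES hs'DS)) htDS), ?_⟩
    intro y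
    obtain ⟨d, hd⟩ := htD (h3 y)
    -- hd : tD • h3 y = fD d
    have e0 : h4 (s'D • h3 y) = 0 :=
      LinearMap.mem_ker.mp (hD'2 (h3 y) ⟨y, rfl⟩)
    have e1 : fE (g4 (s'D • d)) = 0 := by
      have h := LinearMap.congr_fun sq4 (s'D • d)
      simp only [LinearMap.comp_apply] at h
      rw [h, map_smul, ← hd, smul_comm s'D tD, map_smul, e0, smul_zero]
    have e2 : g4 ((uE * s'D) • d) = 0 := by
      rw [mul_smul, map_smul]
      exact huE _ e1
    obtain ⟨c, hc⟩ := hD1 _ (LinearMap.mem_ker.mpr e2)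
    -- hc : g3 c = σD • (uE * s'D) • d
    have e3 : h3 (fC c - (σD * (uE * s'D) * tD) • y) = 0 := by
      have h := LinearMap.congr_fun sq3 c
      simp only [LinearMap.comp_apply] at h
      rw [map_sub, ← h, hc, map_smul, map_smul, ← hd, map_smul, smul_smul,
        smul_smul, mul_assoc, sub_self]
    obtain ⟨b', hb'⟩ := hC'1 _ (LinearMap.mem_ker.mpr e3)
    -- hb' : h2 b' = σ'C • (fC c - w • y)
    obtain ⟨b, hbb⟩ := htB b'
    -- hbb : tB • b' = fB b
    refine ⟨(tB * σ'C) • c - g2 b, ?_⟩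
    have h := LinearMap.congr_fun sq2 b
    simp only [LinearMap.comp_apply] at h
    rw [map_sub, map_smul, h, ← hbb, map_smul, hb', smul_sub, smul_sub,
      smul_smul, smul_smul, smul_smul]
    ring_nf
    abel
end

section
/- Let R be a commutative ring, S a multiplicative subset of R, and E an R-module. If for every injective R-module Q containing E the inclusion gives a u-S-pure short exact sequence 0 → E → Q → Q/E → 0, then every short exact sequence 0 → E → B → C → 0 of R-modules beginning with E is u-S-pure. -/
open TensorProduct

universe u

/-- A short exact sequence `0 → A →f B →g C → 0` is `u`-`S`-pure if for every `R`-module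
`M` the induced sequence `0 → M ⊗ A → M ⊗ B → M ⊗ C → 0` is `u`-`S`-exact. -/
def IsUSPure (R : Type u) [CommRing R] (S : Submonoid R) {A B C : Type u}
    [AddCommGroup A] [Module R A] [AddCommGroup B] [Module R B]
    [AddCommGroup C] [Module R C] (f : A →ₗ[R] B) (g : B →ₗ[R] C) : Prop :=
  ∀ (M : Type u) [AddCommGroup M] [Module R M],
    -- u-S-exact at M ⊗ A
    (∃ s ∈ S, ∀ x : M ⊗[R] A, LinearMap.lTensor M f x = 0 → s • x = 0) ∧
    -- u-S-exact at M ⊗ B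
    (∃ s ∈ S,
      (∀ x ∈ LinearMap.ker (LinearMap.lTensor M g),
        s • x ∈ LinearMap.range (LinearMap.lTensor M f)) ∧
      (∀ x ∈ LinearMap.range (LinearMap.lTensor M f),
        s • x ∈ LinearMap.ker (LinearMap.lTensor M g))) ∧
    -- u-S-exact at M ⊗ C
    (∃ s ∈ S, ∀ y : M ⊗[R] C, ∃ x : M ⊗[R] B, s • y = LinearMap.lTensor M g x)

/-- If for every injective `R`-module `Q` containing `E` the inclusion gives a
`u`-`S`-pure short exact sequence `0 → E → Q → Q/E → 0`, then every short exact sequence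
`0 → E → B → C → 0` beginning with `E` is `u`-`S`-pure. -/
theorem uSPure_of_uSPure_in_injectives
    (R : Type u) [CommRing R] (S : Submonoid R)
    (E : Type u) [AddCommGroup E] [Module R E]
    (hinj : ∀ (Q : Type u) (_ : AddCommGroup Q) (_ : Module R Q),
      Module.Injective R Q → ∀ i : E →ₗ[R] Q, Function.Injective i →
        IsUSPure R S i (LinearMap.range i).mkQ) :
    ∀ (B C : Type u) (_ : AddCommGroup B) (_ : Module R B)
      (_ : AddCommGroup C) (_ : Module R C) (f : E →ₗ[R] B) (g : B →ₗ[R] C),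
      Function.Injective f → Function.Surjective g → Function.Exact f g →
      IsUSPure R S f g := by
  intro B C _ _ _ _ f g hf hg hfg
  -- Embed E into an injective module Q
  classical
  let Qobj := CategoryTheory.Injective.under (ModuleCat.of R E)
  let Q : Type u := Qobj
  letI : AddCommGroup Q := inferInstanceAs (AddCommGroup Qobj)
  letI : Module R Q := inferInstanceAs (Module R Qobj)
  have hQinjobj : CategoryTheory.Injective (ModuleCat.of R Q) := by
    exact CategoryTheory.Injective.injective_under (ModuleCat.of R E)
  haveI hQinj : Module.Injective R Q :=
    Module.injective_module_of_injective_object R Q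
  let i : E →ₗ[R] Q := (CategoryTheory.Injective.ι (ModuleCat.of R E)).hom
  have hi : Function.Injective i := by
    have : CategoryTheory.Mono (CategoryTheory.Injective.ι (ModuleCat.of R E)) :=
      inferInstance
    exact (ModuleCat.mono_iff_injective _).mp this
  obtain ⟨h, hh⟩ := hQinj.out f hf i
  intro M
  refine ⟨?_, ⟨1, one_mem S, ?_, ?_⟩, ⟨1, one_mem S, ?_⟩⟩
  · obtain ⟨s, hs, hker⟩ := (hinj Q ‹_› ‹_› hQinj i hi M).1
    refine ⟨s, hs, fun x hx => hker x ?_⟩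
    have : LinearMap.lTensor M i = (LinearMap.lTensor M h).comp (LinearMap.lTensor M f) := by
      rw [← LinearMap.lTensor_comp]
      congr 1
      ext e
      exact (hh e).symm
    rw [this, LinearMap.comp_apply, hx, map_zero]
  · intro x hx
    rw [one_smul]
    exact (lTensor_exact M hfg hg x).mp hx
  · intro x hx
    rw [one_smul]
    exact (lTensor_exact M hfg hg x).mpr hx
  · intro y
    obtain ⟨x, hx⟩ := LinearMap.lTensor_surjective M hg y
    exact ⟨x, by rw [one_smul, hx]⟩
end

section
/- Let R = ℤ × ℚ (product ring) and E = ℚ × ℚ, viewed as an R-module via componentwise multiplication. Let M = ℤ × {0} and N = ℚ × {0}, R-submodules of E. Then M is an essential R-submodule of N (every nonzero R-submodule of N has nonzero intersection with M), yet every R-linear map from E to M is zero while there exists a nonzero R-linear map from E to N; in particular Hom_R(E,M) = 0 is not an essential submodule of Hom_R(E,N). -/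
/-- `E = ℚ × ℚ` as a module over `R = ℤ × ℚ` via componentwise multiplication (through
the canonical ring homomorphism `ℤ × ℚ →+* ℚ × ℚ`). -/
noncomputable instance moduleZQ : Module (ℤ × ℚ) (ℚ × ℚ) :=
  Module.compHom (ℚ × ℚ) ((Int.castRingHom ℚ).prodMap (RingHom.id ℚ))

/-- `M = ℤ × {0}` as an `ℤ × ℚ`-submodule of `ℚ × ℚ`. -/
def subZ : Submodule (ℤ × ℚ) (ℚ × ℚ) where
  carrier := {p | (∃ n : ℤ, p.1 = (n : ℚ)) ∧ p.2 = 0}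
  add_mem' := by
    rintro ⟨x1, x2⟩ ⟨y1, y2⟩ ⟨⟨n, hn⟩, hx2⟩ ⟨⟨m, hm⟩, hy2⟩
    replace hn : x1 = (n : ℚ) := hn
    replace hm : y1 = (m : ℚ) := hm
    replace hx2 : x2 = 0 := hx2
    replace hy2 : y2 = 0 := hy2
    exact ⟨⟨n + m, by push_cast [hn, hm]; rfl⟩, by simp [hx2, hy2]⟩
  zero_mem' := ⟨⟨0, by simp⟩, rfl⟩
  smul_mem' := by
    rintro ⟨a, b⟩ ⟨x1, x2⟩ ⟨⟨n, hn⟩, hx2⟩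
    replace hn : x1 = (n : ℚ) := hn
    replace hx2 : x2 = 0 := hx2
    refine ⟨⟨a * n, ?_⟩, ?_⟩
    · show (a : ℚ) * x1 = ((a * n : ℤ) : ℚ)
      push_cast [hn]
      ring
    · show b * x2 = 0
      rw [hx2, mul_zero]

/-- `N = ℚ × {0}` as an `ℤ × ℚ`-submodule of `ℚ × ℚ`. -/
def subQ : Submodule (ℤ × ℚ) (ℚ × ℚ) where
  carrier := {p | p.2 = 0}
  add_mem' := by
    rintro ⟨x1, x2⟩ ⟨y1, y2⟩ hx hy
    simp_all
  zero_mem' := rfl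
  smul_mem' := by
    rintro ⟨a, b⟩ ⟨x1, x2⟩ hx
    show b * x2 = 0
    simp_all


lemma smulZQ_def (a : ℤ × ℚ) (x : ℚ × ℚ) :
    a • x = ((a.1 : ℚ) * x.1, a.2 * x.2) := rfl

/-- Let `R = ℤ × ℚ`, `E = ℚ × ℚ`, `M = ℤ × {0}` and `N = ℚ × {0}`. Then `M` is an
essential `R`-submodule of `N`, yet every `R`-linear map `E → M` is zero while there is
a nonzero `R`-linear map `E → N`; in particular `Hom_R(E,M) = 0` is not an essential
submodule of `Hom_R(E,N)`. -/
theorem essential_not_preserved_by_hom :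
    (subZ ≤ subQ) ∧
    -- `M` is an essential submodule of `N`
    (∀ P : Submodule (ℤ × ℚ) (ℚ × ℚ), P ≤ subQ → P ≠ ⊥ → subZ ⊓ P ≠ ⊥) ∧
    -- every `R`-linear map `E → M` is zero
    (∀ f : (ℚ × ℚ) →ₗ[ℤ × ℚ] subZ, f = 0) ∧
    -- there is a nonzero `R`-linear map `E → N`
    (∃ g : (ℚ × ℚ) →ₗ[ℤ × ℚ] subQ, g ≠ 0) := by

  refine ⟨fun p hp => hp.2, ?_, ?_, ?_⟩
  · intro P hPQ hP
    obtain ⟨x, hxP, hx0⟩ := Submodule.exists_mem_ne_zero_of_ne_bot hP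
    have hx2 : x.2 = 0 := hPQ hxP
    have hx1 : x.1 ≠ 0 := by
      intro h; exact hx0 (Prod.ext h hx2)
    set y : ℚ × ℚ := ((x.1.den : ℤ), (0:ℚ)) • x with hy
    intro hbot
    have hyP : y ∈ P := Submodule.smul_mem P _ hxP
    have hyZ : y ∈ subZ := by
      refine ⟨⟨x.1.num, ?_⟩, ?_⟩
      · show ((x.1.den : ℤ) : ℚ) * x.1 = (x.1.num : ℚ)
        rw [mul_comm]
        push_cast
        exact Rat.mul_den_eq_num _
      · show (0:ℚ) * x.2 = 0
        simp
    have hy0 : y ≠ 0 := by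
      intro h
      have h1 : ((x.1.den : ℤ) : ℚ) * x.1 = 0 := congrArg Prod.fst h
      have : ((x.1.den : ℤ) : ℚ) ≠ 0 := by
        exact_mod_cast x.1.den_ne_zero
      exact hx1 ((mul_eq_zero.mp h1).resolve_left this)
    have : y ∈ subZ ⊓ P := ⟨hyZ, hyP⟩
    rw [hbot] at this
    exact hy0 this
  · intro f
    ext x
    · obtain ⟨⟨k, hk⟩, h2⟩ := (f x).2
      have key : ∀ n : ℤ, n ≠ 0 → ∃ m : ℤ, (k : ℚ) = (n : ℚ) * (m : ℚ) := by
        intro n hn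
        have hx : ((n, (1:ℚ)) : ℤ × ℚ) • (x.1 / (n : ℚ), x.2) = x := by
          rw [smulZQ_def]
          have : (n:ℚ) ≠ 0 := Int.cast_ne_zero.mpr hn
          simp [mul_div_cancel₀, this]
        obtain ⟨⟨m, hm⟩, -⟩ := (f (x.1 / (n : ℚ), x.2)).2
        refine ⟨m, ?_⟩
        calc (k : ℚ) = ((f x : ℚ × ℚ)).1 := hk.symm
          _ = (n : ℚ) * (m : ℚ) := by
            rw [← hx, map_smul]
            have := congrArg Prod.fst (smulZQ_def ((n, (1:ℚ)) : ℤ × ℚ) ((f (x.1 / (n : ℚ), x.2)) : ℚ × ℚ))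
            simpa [hm] using this
      obtain ⟨m, hm⟩ := key (|k| + 1) (by positivity)
      have hkm : k = (|k| + 1) * m := by exact_mod_cast hm
      have hk0 : k = 0 := by
        rcases eq_or_ne m 0 with h | h
        · simpa [h] using hkm
        · exfalso
          have h1 : 1 ≤ |m| := Int.one_le_abs h
          have habs : |k| = (|k| + 1) * |m| := by
            conv_lhs => rw [hkm]
            rw [abs_mul, abs_of_pos (by positivity : (0:ℤ) < |k| + 1)]
          nlinarith [abs_nonneg k]
      show ((f x : ℚ × ℚ)).1 = ((0 : subZ) : ℚ × ℚ).1
      rw [hk, hk0]; simp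
    · show ((f x : ℚ × ℚ)).2 = ((0 : subZ) : ℚ × ℚ).2
      rw [(f x).2.2]; rfl
  · refine ⟨{ toFun := fun x => ⟨(x.1, 0), rfl⟩, map_add' := ?_, map_smul' := ?_ }, ?_⟩
    · intro x y; ext <;> simp
    · intro a x
      ext
      · show (a • x).1 = (a.1 : ℚ) * x.1
        rw [smulZQ_def]
      · show (0:ℚ) = a.2 * 0
        simp
    · intro h
      have := congrArg (fun f => ((f (1,0) : subQ) : ℚ × ℚ).1) h
      simp at this
end
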